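/- Let S_curr ⊆ S_prev ⊆ D be nonempty, let p ∈ S_curr, and let v = arr(S_curr \ {p}). If no point of S_curr has evaluation value based on S_prev smaller than v, i.e., arr(S_prev \ {p'}) ≥ v for every p' ∈ S_curr, then p attains the minimum of the map q ↦ arr(S_curr \ {q}) over q ∈ S_curr; that is, arr(S_curr \ {p}) = min_{q ∈ S_curr} arr(S_curr \ {q}). -/
import Mathlib


/-- Satisfaction of a utility function `f` with respect to a set `S`:
the maximum of `f` over `S`, with the convention `sat ∅ f = 0`. -/
noncomputable def sat {D : Type*} (S : Finset D) (f : D → ℝ) : ℝ :=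
  if h : S.Nonempty then S.sup' h f else 0

/-- Regret ratio of `f` with respect to `S`, where the database is the whole
finite type `D`. -/
noncomputable def rr {D : Type*} [Fintype D] (S : Finset D) (f : D → ℝ) : ℝ :=
  (sat Finset.univ f - sat S f) / sat Finset.univ f

/-- Average regret ratio of `S` over a finite set of users `ι` with utility
functions `f i` and weights `η i`. -/
noncomputable def arr {D ι : Type*} [Fintype D] [Fintype ι]
    (η : ι → ℝ) (f : ι → D → ℝ) (S : Finset D) : ℝ :=
  ∑ i : ι, η i * rr S (f i)


lemma sat_mono {D : Type*} {S T : Finset D} (hST : S ⊆ T) {f : D → ℝ}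
    (hf : ∀ p, 0 ≤ f p) : sat S f ≤ sat T f := by
  unfold sat
  rcases S.eq_empty_or_nonempty with h | h
  · subst h; simp only [Finset.not_nonempty_empty, dif_neg, not_false_iff]
    rcases T.eq_empty_or_nonempty with h2 | h2
    · simp [h2]
    · rw [dif_pos h2]
      obtain ⟨x, hx⟩ := h2
      exact le_trans (hf x) (Finset.le_sup' f hx)
  · have hT : T.Nonempty := h.mono hST
    rw [dif_pos h, dif_pos hT]
    exact Finset.sup'_mono f hST h

lemma arr_anti {D ι : Type*} [Fintype D] [Fintype ι]
    (η : ι → ℝ) (f : ι → D → ℝ)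
    (hf : ∀ (i : ι) (p : D), 0 ≤ f i p)
    (hη : ∀ i : ι, 0 ≤ η i)
    (hD : ∀ i : ι, 0 < sat (Finset.univ : Finset D) (f i))
    {S T : Finset D} (hST : S ⊆ T) :
    arr η f T ≤ arr η f S := by
  unfold arr
  apply Finset.sum_le_sum
  intro i _
  apply mul_le_mul_of_nonneg_left _ (hη i)
  unfold rr
  apply div_le_div_of_nonneg_right _ (hD i).le
  · exact sub_le_sub_left (sat_mono hST (hf i)) _

/-- If no point of `S_curr` has evaluation value based on `S_prev` smaller than
`v = arr (S_curr \ {p})`, then `p` attains the minimum of the evaluation values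
based on `S_curr`. -/
theorem eval_is_min {D ι : Type*} [Fintype D] [DecidableEq D] [Nonempty D]
    [Fintype ι]
    (η : ι → ℝ) (f : ι → D → ℝ)
    (hf : ∀ (i : ι) (p : D), 0 ≤ f i p)
    (hη : ∀ i : ι, 0 ≤ η i)
    (hηsum : ∑ i : ι, η i = 1)
    (hD : ∀ i : ι, 0 < sat (Finset.univ : Finset D) (f i))
    (Scurr Sprev : Finset D) (hsub : Scurr ⊆ Sprev) (hne : Scurr.Nonempty)
    (p : D) (hp : p ∈ Scurr)
    (hge : ∀ p' ∈ Scurr, arr η f (Scurr.erase p) ≤ arr η f (Sprev.erase p')) :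
    arr η f (Scurr.erase p) = Scurr.inf' hne (fun q => arr η f (Scurr.erase q)) := by
  refine le_antisymm ?_ (Finset.inf'_le _ hp)
  rw [Finset.le_inf'_iff]
  intro q hq
  calc arr η f (Scurr.erase p) ≤ arr η f (Sprev.erase q) := hge q hq
    _ ≤ arr η f (Scurr.erase q) :=
      arr_anti η f hf hη hD (Finset.erase_subset_erase q hsub)
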